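/- Let T be a tree with diametrical path v₀,...,v_d and subtrees T_i as defined. If for some i ∈ {2,...,d−2}, T_i has an independent set of cardinality 2 that does not dominate v_i, then Γ_b(T) > diam(T). -/

import Mathlib

namespace AJC

variable {V : Type*}

/-- Eccentricity of a vertex: max distance to any vertex. -/
noncomputable def ecc [Fintype V] (G : SimpleGraph V) (v : V) : ℕ :=
  Finset.univ.sup (fun u => G.dist v u)

/-- Diameter: max eccentricity. -/
noncomputable def diam [Fintype V] (G : SimpleGraph V) : ℕ :=
  Finset.univ.sup (fun v => ecc G v)

/-- Radius: minimum eccentricity. -/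
noncomputable def rad [Fintype V] (G : SimpleGraph V) : ℕ :=
  sInf (Set.range (ecc G))

/-- A broadcast on `G`. -/
def IsBroadcast [Fintype V] (G : SimpleGraph V) (f : V → ℕ) : Prop :=
  ∀ v, f v ≤ ecc G v

/-- `u` hears the broadcast `f` (is dominated by `f`). -/
def Hears (G : SimpleGraph V) (f : V → ℕ) (u : V) : Prop :=
  ∃ v, 1 ≤ f v ∧ G.dist v u ≤ f v

/-- A dominating broadcast. -/
def IsDomBroadcast [Fintype V] (G : SimpleGraph V) (f : V → ℕ) : Prop :=
  IsBroadcast G f ∧ ∀ u, Hears G f u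

/-- A minimal dominating broadcast: no strictly smaller broadcast is dominating. -/
def IsMinDomBroadcast [Fintype V] (G : SimpleGraph V) (f : V → ℕ) : Prop :=
  IsDomBroadcast G f ∧ ∀ f' : V → ℕ, f' < f → ¬ IsDomBroadcast G f'

/-- The cost of a broadcast. -/
def cost [Fintype V] (f : V → ℕ) : ℕ := ∑ v, f v

/-- The upper broadcast domination number `Γ_b`. -/
noncomputable def upperBroadcastNum [Fintype V] (G : SimpleGraph V) : ℕ :=
  sSup {n | ∃ f : V → ℕ, IsMinDomBroadcast G f ∧ cost f = n}

/-- The broadcast domination number `γ_b`. -/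
noncomputable def broadcastNum [Fintype V] (G : SimpleGraph V) : ℕ :=
  sInf {n | ∃ f : V → ℕ, IsDomBroadcast G f ∧ cost f = n}

/-- The `f`-neighbourhood of `v`. -/
def Nf (G : SimpleGraph V) (f : V → ℕ) (v : V) : Set V := {u | G.dist v u ≤ f v}

/-- The `f`-boundary of `v`. -/
def Bf (G : SimpleGraph V) (f : V → ℕ) (v : V) : Set V := {u | G.dist v u = f v}

/-- The `f`-private neighbourhood of `v`. -/
def PN (G : SimpleGraph V) (f : V → ℕ) (v : V) : Set V :=
  {u | G.dist v u ≤ f v ∧ ∀ w, w ≠ v → 1 ≤ f w → ¬ G.dist w u ≤ f w}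

/-- The `f`-private boundary of `v`: vertices in `N_f[v]` not dominated once the
broadcast at `v` is decreased by one. -/
def PB [DecidableEq V] (G : SimpleGraph V) (f : V → ℕ) (v : V) : Set V :=
  {u | G.dist v u ≤ f v ∧ ¬ Hears G (Function.update f v (f v - 1)) u}

/-- A dominating set of vertices. -/
def IsDomSet (G : SimpleGraph V) (S : Finset V) : Prop :=
  ∀ v, v ∈ S ∨ ∃ u ∈ S, G.Adj u v

/-- A minimal dominating set. -/
def IsMinDomSet (G : SimpleGraph V) (S : Finset V) : Prop :=
  IsDomSet G S ∧ ∀ T ⊂ S, ¬ IsDomSet G T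

/-- An independent set of vertices. -/
def IsIndepSet (G : SimpleGraph V) (S : Finset V) : Prop :=
  ∀ u ∈ S, ∀ w ∈ S, u ≠ w → ¬ G.Adj u w

/-- The upper domination number `Γ`. -/
noncomputable def upperDomNum [Fintype V] (G : SimpleGraph V) : ℕ :=
  sSup {n | ∃ S : Finset V, IsMinDomSet G S ∧ S.card = n}

/-- The domination number `γ`. -/
noncomputable def domNum [Fintype V] (G : SimpleGraph V) : ℕ :=
  sInf {n | ∃ S : Finset V, IsDomSet G S ∧ S.card = n}

/-- The independence number `α`. -/
noncomputable def indepNum [Fintype V] (G : SimpleGraph V) : ℕ :=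
  sSup {n | ∃ S : Finset V, IsIndepSet G S ∧ S.card = n}

/-- Given a diametrical path `v 0, …, v d` of a tree, `sideTree G d v i` is the set of
vertices connected to `v i` by a path internally disjoint from the diametrical path. -/
def sideTree (G : SimpleGraph V) (d : ℕ) (v : ℕ → V) (i : ℕ) : Set V :=
  {x | ∃ p : G.Walk x (v i), p.IsPath ∧ ∀ y ∈ p.support, y ≠ v i → ∀ j ≤ d, v j ≠ y}

/-- The diameter of the subtree `T_i`. -/
noncomputable def sideDiam (G : SimpleGraph V) (d : ℕ) (v : ℕ → V) (i : ℕ) : ℕ :=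
  sSup {n | ∃ x ∈ sideTree G d v i, ∃ y ∈ sideTree G d v i, G.dist x y = n}

/-- The eccentricity of a vertex `x` within the subtree `T_i`. -/
noncomputable def sideEcc (G : SimpleGraph V) (d : ℕ) (v : ℕ → V) (i : ℕ) (x : V) : ℕ :=
  sSup {n | ∃ y ∈ sideTree G d v i, G.dist x y = n}

/-- A leaf of `G`. -/
def IsLeaf [Fintype V] (G : SimpleGraph V) [DecidableRel G.Adj] (x : V) : Prop :=
  G.degree x = 1

/-- A stem: a vertex adjacent to a leaf. -/
def IsStem [Fintype V] (G : SimpleGraph V) [DecidableRel G.Adj] (x : V) : Prop :=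
  ∃ l, IsLeaf G l ∧ G.Adj x l

/-- A strong stem: a vertex adjacent to at least two leaves. -/
def IsStrongStem [Fintype V] (G : SimpleGraph V) [DecidableRel G.Adj] (x : V) : Prop :=
  ∃ l₁ l₂, l₁ ≠ l₂ ∧ IsLeaf G l₁ ∧ IsLeaf G l₂ ∧ G.Adj x l₁ ∧ G.Adj x l₂

/-!
Let `a, b ∈ T_i` and `α = d(a, v_i) ≤ d(b, v_i)`, so `α ≥ 2`. Let `v_0` broadcast with strength
`i + α - 1`, `v_d` with strength `d - i + α - 1`, and every other vertex at distance at least 2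
from the spine with strength 1, except the common neighbours of `a` and `b`. Since `α ≥ 2` this
dominates. In a dominating broadcast `g` below it the spine can only be heard from `v_0` and
`v_d`, which forces `g(v_0) + g(v_d) ≥ d - 1`; neither end reaches `a` or `b`, and no single
vertex of strength 1 hears both, so two more vertices broadcast. Hence every minimal dominating
broadcast below it costs more than `d`.
-/

open SimpleGraph

theorem _root_.SimpleGraph.IsTree.length_eq_dist {G : SimpleGraph V} (hT : G.IsTree) {x y : V}
    {p : G.Walk x y} (hp : p.IsPath) : p.length = G.dist x y := by
  obtain ⟨q, hq, hql⟩ := hT.connected.exists_path_of_dist x y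
  rw [(hT.existsUnique_path x y).unique hp hq, hql]

section Broadcast

variable [Fintype V] {G : SimpleGraph V}

lemma dist_le_ecc (x y : V) : G.dist x y ≤ ecc G x :=
  Finset.le_sup (f := fun u => G.dist x u) (Finset.mem_univ y)

lemma dist_le_diam (x y : V) : G.dist x y ≤ diam G :=
  (dist_le_ecc x y).trans (Finset.le_sup (f := fun u => ecc G u) (Finset.mem_univ x))

lemma cost_le_upperBroadcastNum {f : V → ℕ} (hf : IsMinDomBroadcast G f) :
    cost f ≤ upperBroadcastNum G := by
  refine le_csSup ⟨∑ x, ecc G x, ?_⟩ ⟨f, hf, rfl⟩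
  rintro _ ⟨g, hg, rfl⟩
  exact Finset.sum_le_sum fun x _ => hg.1.1 x

lemma exists_isMinDomBroadcast_le {f : V → ℕ} (hf : IsDomBroadcast G f) :
    ∃ g ≤ f, IsMinDomBroadcast G g := by
  obtain ⟨g, hgf, hg⟩ := exists_minimal_le_of_wellFoundedLT (IsDomBroadcast G) f hf
  exact ⟨g, hgf, minimal_iff_forall_lt.1 hg⟩

lemma lt_upperBroadcastNum_of_lt_cost {f : V → ℕ} {n : ℕ} (hf : IsDomBroadcast G f)
    (h : ∀ g ≤ f, (∀ u, Hears G g u) → n < cost g) : n < upperBroadcastNum G := by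
  obtain ⟨g, hgf, hg⟩ := exists_isMinDomBroadcast_le hf
  exact (h g hgf hg.1.2).trans_le (cost_le_upperBroadcastNum hg)

end Broadcast

section SpineBroadcast

variable {G : SimpleGraph V} {d r s : ℕ} {v : ℕ → V} {a b z : V}

/-- Common neighbours of `a` and `b` stay silent, so that no vertex of strength 1 hears both. -/
noncomputable def spineBroadcast (G : SimpleGraph V) (d : ℕ) (v : ℕ → V) (a b : V)
    (r s : ℕ) : V → ℕ := by
  classical
  exact fun z => if z = v 0 then r else if z = v d then s
    else if (∀ k ≤ d, 2 ≤ G.dist z (v k)) ∧ ¬(G.Adj z a ∧ G.Adj z b) then 1 else 0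

lemma spineBroadcast_v0 : spineBroadcast G d v a b r s (v 0) = r := by
  simp [spineBroadcast]

lemma spineBroadcast_vd (h : v d ≠ v 0) : spineBroadcast G d v a b r s (v d) = s := by
  simp [spineBroadcast, h]

lemma spineBroadcast_of_far (hfar : ∀ k ≤ d, 2 ≤ G.dist z (v k))
    (hz : ¬(G.Adj z a ∧ G.Adj z b)) : spineBroadcast G d v a b r s z = 1 := by
  have h0 : z ≠ v 0 := by rintro rfl; simpa using hfar 0 (Nat.zero_le d)
  have hd : z ≠ v d := by rintro rfl; simpa using hfar d le_rfl
  simp only [spineBroadcast, if_neg h0, if_neg hd]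
  exact if_pos ⟨hfar, hz⟩

lemma spineBroadcast_pos (h0 : z ≠ v 0) (hd : z ≠ v d)
    (hz : 0 < spineBroadcast G d v a b r s z) :
    spineBroadcast G d v a b r s z = 1 ∧ (∀ k ≤ d, 2 ≤ G.dist z (v k)) ∧
      ¬(G.Adj z a ∧ G.Adj z b) := by
  simp only [spineBroadcast, if_neg h0, if_neg hd] at hz ⊢
  split_ifs at hz ⊢ with h
  · exact ⟨rfl, h⟩
  · omega

lemma isDomBroadcast_spineBroadcast [Fintype V] (hconn : G.Connected)
    (hv0 : ∀ k ≤ d, G.dist (v 0) (v k) = k) (hvd : ∀ k ≤ d, G.dist (v d) (v k) = d - k)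
    (hv0d : v d ≠ v 0) (hrs : d + 1 ≤ r + s) (ha0 : r < G.dist (v 0) a)
    (had : s < G.dist (v d) a) (hfar : ∀ k ≤ d, 2 ≤ G.dist a (v k)) :
    IsDomBroadcast G (spineBroadcast G d v a b r s) := by
  have hfa : spineBroadcast G d v a b r s a = 1 :=
    spineBroadcast_of_far hfar fun h => G.irrefl h.1
  refine ⟨fun z => ?_, fun u => ?_⟩
  · by_cases h0 : z = v 0
    · subst h0
      rw [spineBroadcast_v0]
      exact ha0.le.trans (dist_le_ecc _ _)
    by_cases hd : z = v d
    · subst hd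
      rw [spineBroadcast_vd hv0d]
      exact had.le.trans (dist_le_ecc _ _)
    rcases Nat.eq_zero_or_pos (spineBroadcast G d v a b r s z) with h | h
    · exact h.trans_le (Nat.zero_le _)
    · obtain ⟨h1, hzfar, -⟩ := spineBroadcast_pos h0 hd h
      have := hzfar 0 (Nat.zero_le d)
      exact h1.trans_le (by omega : 1 ≤ G.dist z (v 0)) |>.trans (dist_le_ecc _ _)
  · by_cases hnear : ∃ k ≤ d, G.dist (v k) u ≤ 1
    · obtain ⟨k, hk, hku⟩ := hnear
      -- the balls of radius `r` around `v 0` and `s` around `v d` cover the 1-neighbourhood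
      -- of the spine because `r + s > d`
      by_cases hkr : k + 1 ≤ r
      · have := hconn.dist_triangle (u := v 0) (v := v k) (w := u)
        have := hv0 k hk
        refine ⟨v 0, ?_, ?_⟩ <;> rw [spineBroadcast_v0] <;> omega
      · have := hconn.dist_triangle (u := v d) (v := v k) (w := u)
        have := hvd k hk
        refine ⟨v d, ?_, ?_⟩ <;> rw [spineBroadcast_vd hv0d] <;> omega
    · push Not at hnear
      by_cases hc : G.Adj u a ∧ G.Adj u b
      · refine ⟨a, hfa.ge, ?_⟩
        rw [hfa, SimpleGraph.dist_comm, dist_eq_one_iff_adj.2 hc.1]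
      · refine ⟨u, (spineBroadcast_of_far (fun k hk => ?_) hc).ge, by simp⟩
        rw [SimpleGraph.dist_comm]
        exact hnear k hk

lemma lt_cost_of_le_spineBroadcast [Fintype V] (hconn : G.Connected)
    (hv0 : ∀ k ≤ d, G.dist (v 0) (v k) = k) (hvd : ∀ k ≤ d, G.dist (v d) (v k) = d - k)
    (hv0d : v d ≠ v 0) (hrd : r < d) (ha0 : r < G.dist (v 0) a) (hb0 : r < G.dist (v 0) b)
    (had : s < G.dist (v d) a) (hbd : s < G.dist (v d) b) (hab : 2 ≤ G.dist a b)
    {g : V → ℕ} (hg : g ≤ spineBroadcast G d v a b r s) (hdom : ∀ u, Hears G g u) :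
    d < cost g := by
  have hgv0 : g (v 0) ≤ r := (hg _).trans_eq spineBroadcast_v0
  have hgvd : g (v d) ≤ s := (hg _).trans_eq (spineBroadcast_vd hv0d)
  -- the spine is heard only from its ends
  have hinner : ∀ w, w ≠ v 0 → w ≠ v d → 1 ≤ g w →
      g w = 1 ∧ (∀ k ≤ d, 2 ≤ G.dist w (v k)) ∧ ¬(G.Adj w a ∧ G.Adj w b) := by
    intro w h0 hd hw
    obtain ⟨h1, hfar, hc⟩ := spineBroadcast_pos h0 hd (hw.trans (hg w))
    exact ⟨le_antisymm (h1 ▸ hg w) hw, hfar, hc⟩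
  have hends : d ≤ g (v 0) + g (v d) + 1 := by
    obtain ⟨w, hw, hwk⟩ := hdom (v (g (v 0) + 1))
    by_cases h0 : w = v 0
    · rw [h0, hv0 _ (by omega)] at hwk
      omega
    by_cases hd : w = v d
    · rw [hd, hvd _ (by omega)] at hwk
      omega
    obtain ⟨h1, hfar, -⟩ := hinner w h0 hd hw
    have := hfar (g (v 0) + 1) (by omega)
    omega
  obtain ⟨wa, hwa, hwa'⟩ := hdom a
  obtain ⟨wb, hwb, hwb'⟩ := hdom b
  have hwa0 : wa ≠ v 0 := by rintro rfl; omega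
  have hwad : wa ≠ v d := by rintro rfl; omega
  have hwb0 : wb ≠ v 0 := by rintro rfl; omega
  have hwbd : wb ≠ v d := by rintro rfl; omega
  obtain ⟨hwa1, -, hwac⟩ := hinner wa hwa0 hwad hwa
  obtain ⟨hwb1, -, -⟩ := hinner wb hwb0 hwbd hwb
  have hwawb : wa ≠ wb := by
    rintro rfl
    have hwa_a : wa ≠ a := by rintro rfl; omega
    have hwa_b : wa ≠ b := by rintro rfl; rw [SimpleGraph.dist_comm] at hab; omega
    have := hconn.pos_dist_of_ne hwa_a
    have := hconn.pos_dist_of_ne hwa_b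
    exact hwac ⟨dist_eq_one_iff_adj.1 (by omega), dist_eq_one_iff_adj.1 (by omega)⟩
  classical
  calc d < g (v 0) + g (v d) + g wa + g wb := by omega
    _ = ∑ x ∈ {v 0, v d, wa, wb}, g x := by
      rw [Finset.sum_insert (by simp [hv0d.symm, hwa0.symm, hwb0.symm]),
        Finset.sum_insert (by simp [hwad.symm, hwbd.symm]),
        Finset.sum_pair hwawb]
      ring
    _ ≤ cost g := Finset.sum_le_sum_of_subset (Finset.subset_univ _)

theorem lt_upperBroadcastNum_of_spine [Fintype V] (hconn : G.Connected)
    (hv0 : ∀ k ≤ d, G.dist (v 0) (v k) = k) (hvd : ∀ k ≤ d, G.dist (v d) (v k) = d - k)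
    (hrd : r < d) (hrs : d + 1 ≤ r + s) (ha0 : r < G.dist (v 0) a)
    (hb0 : r < G.dist (v 0) b) (had : s < G.dist (v d) a) (hbd : s < G.dist (v d) b)
    (hfar : ∀ k ≤ d, 2 ≤ G.dist a (v k)) (hab : 2 ≤ G.dist a b) :
    d < upperBroadcastNum G := by
  have hv0d : v d ≠ v 0 := by
    intro h
    have := hv0 d le_rfl
    rw [h, SimpleGraph.dist_self] at this
    omega
  exact lt_upperBroadcastNum_of_lt_cost
    (isDomBroadcast_spineBroadcast hconn hv0 hvd hv0d hrs ha0 had hfar)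
    fun _ hg hdom =>
      lt_cost_of_le_spineBroadcast hconn hv0 hvd hv0d hrd ha0 hb0 had hbd hab hg hdom

end SpineBroadcast

section Tree

variable {G : SimpleGraph V} {d : ℕ} {v : ℕ → V}

lemma exists_isPath_spine_of_le (hadj : ∀ i < d, G.Adj (v i) (v (i + 1)))
    (hinj : ∀ i ≤ d, ∀ j ≤ d, v i = v j → i = j) {j k : ℕ} (hjk : j ≤ k)
    (hk : k ≤ d) :
    ∃ q : G.Walk (v j) (v k), q.IsPath ∧ q.length = k - j ∧
      ∀ y ∈ q.support, ∃ m, j ≤ m ∧ m ≤ k ∧ y = v m := by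
  induction k, hjk using Nat.le_induction with
  | base => exact ⟨.nil, by simp, by simp, by simpa using ⟨j, le_rfl, le_rfl, rfl⟩⟩
  | succ k hjk ih =>
    obtain ⟨q, hq, hlen, hsupp⟩ := ih (by omega)
    refine ⟨q.concat (hadj k (by omega)), hq.concat ?_ _, by simp [hlen]; omega, ?_⟩
    · intro hmem
      obtain ⟨m, -, hmk, hm⟩ := hsupp _ hmem
      have := hinj (k + 1) hk m (by omega) hm
      omega
    · intro y hy
      rw [Walk.support_concat, List.mem_append] at hy
      rcases hy with hy | hy
      · obtain ⟨m, hjm, hmk, rfl⟩ := hsupp y hy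
        exact ⟨m, hjm, by omega, rfl⟩
      · exact ⟨k + 1, by omega, le_rfl, List.mem_singleton.1 hy⟩

lemma exists_isPath_spine (hadj : ∀ i < d, G.Adj (v i) (v (i + 1)))
    (hinj : ∀ i ≤ d, ∀ j ≤ d, v i = v j → i = j) {j k : ℕ} (hj : j ≤ d)
    (hk : k ≤ d) :
    ∃ q : G.Walk (v j) (v k), q.IsPath ∧ q.length = (k - j) + (j - k) ∧
      ∀ y ∈ q.support, ∃ m ≤ d, y = v m := by
  rcases le_total j k with hjk | hkj
  · obtain ⟨q, hq, hlen, hsupp⟩ := exists_isPath_spine_of_le hadj hinj hjk hk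
    refine ⟨q, hq, by omega, fun y hy => ?_⟩
    obtain ⟨m, -, hmk, rfl⟩ := hsupp y hy
    exact ⟨m, by omega, rfl⟩
  · obtain ⟨q, hq, hlen, hsupp⟩ := exists_isPath_spine_of_le hadj hinj hkj hj
    refine ⟨q.reverse, hq.reverse, by simp [hlen]; omega, fun y hy => ?_⟩
    obtain ⟨m, -, hmj, rfl⟩ := hsupp y (by simpa [Walk.support_reverse] using hy)
    exact ⟨m, by omega, rfl⟩

lemma dist_spine (hT : G.IsTree) (hadj : ∀ i < d, G.Adj (v i) (v (i + 1)))
    (hinj : ∀ i ≤ d, ∀ j ≤ d, v i = v j → i = j) {j k : ℕ} (hj : j ≤ d) (hk : k ≤ d) :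
    G.dist (v j) (v k) = (k - j) + (j - k) := by
  obtain ⟨q, hq, hlen, -⟩ := exists_isPath_spine hadj hinj hj hk
  rw [← hT.length_eq_dist hq, hlen]

lemma dist_of_mem_sideTree (hT : G.IsTree) (hadj : ∀ i < d, G.Adj (v i) (v (i + 1)))
    (hinj : ∀ i ≤ d, ∀ j ≤ d, v i = v j → i = j) {i k : ℕ} (hi : i ≤ d) (hk : k ≤ d)
    {x : V} (hx : x ∈ sideTree G d v i) :
    G.dist x (v k) = G.dist x (v i) + G.dist (v i) (v k) := by
  obtain ⟨p, hp, hpoff⟩ := hx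
  obtain ⟨q, hq, -, hqon⟩ := exists_isPath_spine hadj hinj hi hk
  have hdisj : p.support.Disjoint q.support.tail := by
    intro y hyp hyq
    obtain ⟨m, hm, rfl⟩ := hqon y (List.mem_of_mem_tail hyq)
    have hne : v m ≠ v i := by
      intro h
      have hnodup := hq.support_nodup
      rw [← q.cons_tail_support] at hnodup
      rw [h] at hyq
      exact (List.nodup_cons.1 hnodup).1 hyq
    exact hpoff (v m) hyp hne m hm rfl
  have hpq : (p.append q).IsPath := by
    rw [Walk.isPath_def, Walk.support_append]
    exact hp.support_nodup.append (hq.support_nodup.sublist (List.tail_sublist _)) hdisj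
  rw [← hT.length_eq_dist hpq, Walk.length_append, hT.length_eq_dist hp, hT.length_eq_dist hq]

end Tree

theorem lt_upperBroadcastNum_of_mem_sideTree [Fintype V] {G : SimpleGraph V} {d i : ℕ}
    {v : ℕ → V} (hT : G.IsTree) (hdiam : diam G = d)
    (hadj : ∀ i < d, G.Adj (v i) (v (i + 1)))
    (hinj : ∀ i ≤ d, ∀ j ≤ d, v i = v j → i = j) (hi : i ≤ d) {a b : V}
    (ha : a ∈ sideTree G d v i) (hb : b ∈ sideTree G d v i)
    (hab : 2 ≤ G.dist a b) (hai : 2 ≤ G.dist a (v i))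
    (hle : G.dist a (v i) ≤ G.dist b (v i)) : d < upperBroadcastNum G := by
  have hspine : ∀ j ≤ d, ∀ k ≤ d, G.dist (v j) (v k) = (k - j) + (j - k) :=
    fun j hj k hk => dist_spine hT hadj hinj hj hk
  have hside : ∀ x ∈ sideTree G d v i, ∀ k ≤ d,
      G.dist (v k) x = G.dist x (v i) + ((k - i) + (i - k)) :=
    fun x hx k hk => by
      rw [SimpleGraph.dist_comm, dist_of_mem_sideTree hT hadj hinj hi hk hx, hspine i hi k hk]
  have ha0 := hside a ha 0 (Nat.zero_le d)
  have had := hside a ha d le_rfl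
  have hb0 := hside b hb 0 (Nat.zero_le d)
  have hbd := hside b hb d le_rfl
  have hdiam_a : G.dist (v 0) a ≤ d := hdiam ▸ dist_le_diam _ _
  -- `v 0` and `v d` broadcast just short of reaching `a`
  refine lt_upperBroadcastNum_of_spine (r := i + G.dist a (v i) - 1)
    (s := d - i + G.dist a (v i) - 1)
    hT.connected (fun k hk => by rw [hspine 0 (Nat.zero_le d) k hk]; omega)
    (fun k hk => by rw [hspine d le_rfl k hk]; omega) (by omega) (by omega) (by omega) (by omega)
    (by omega) (by omega) (fun k hk => ?_) hab
  rw [SimpleGraph.dist_comm, hside a ha k hk]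
  omega

theorem stmt9_general {V : Type*} [Fintype V] (G : SimpleGraph V)
    (hT : G.IsTree) (d : ℕ) (v : ℕ → V)
    (hdiam : diam G = d)
    (hadj : ∀ i < d, G.Adj (v i) (v (i + 1)))
    (hinj : ∀ i ≤ d, ∀ j ≤ d, v i = v j → i = j)
    (i : ℕ) (hi2 : i ≤ d - 2)
    (S : Finset V) (hcard : S.card = 2) (hind : IsIndepSet G S)
    (hsub : ↑S ⊆ sideTree G d v i)
    (hnotdom : v i ∉ S ∧ ∀ s ∈ S, ¬ G.Adj s (v i)) :
    diam G < upperBroadcastNum G := by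
  classical
  obtain ⟨a, b, hne, rfl⟩ := Finset.card_eq_two.1 hcard
  have hfar : ∀ x ∈ ({a, b} : Finset V), 2 ≤ G.dist x (v i) := fun x hx =>
    hT.connected.one_lt_dist_of_ne_of_not_adj (fun h => hnotdom.1 (h ▸ hx)) (hnotdom.2 x hx)
  have hab : 2 ≤ G.dist a b :=
    hT.connected.one_lt_dist_of_ne_of_not_adj hne (hind a (by simp) b (by simp) hne)
  have hi : i ≤ d := by omega
  rw [hdiam]
  rcases le_total (G.dist a (v i)) (G.dist b (v i)) with h | h
  · exact lt_upperBroadcastNum_of_mem_sideTree hT hdiam hadj hinj hi (hsub (by simp))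
      (hsub (by simp)) hab (hfar a (by simp)) h
  · exact lt_upperBroadcastNum_of_mem_sideTree hT hdiam hadj hinj hi (hsub (by simp))
      (hsub (by simp)) (SimpleGraph.dist_comm ▸ hab) (hfar b (by simp)) h

/-- an independent set of size 2 in some `T_i` not dominating `v i`
forces `Γ_b(T) > diam(T)`. -/
theorem stmt9 {V : Type*} [Fintype V] [DecidableEq V] (G : SimpleGraph V)
    [DecidableRel G.Adj] (hT : G.IsTree) (d : ℕ) (v : ℕ → V)
    (hdiam : diam G = d)
    (hadj : ∀ i < d, G.Adj (v i) (v (i + 1)))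
    (hinj : ∀ i ≤ d, ∀ j ≤ d, v i = v j → i = j)
    (i : ℕ) (hi1 : 2 ≤ i) (hi2 : i ≤ d - 2)
    (S : Finset V) (hcard : S.card = 2) (hind : IsIndepSet G S)
    (hsub : ↑S ⊆ sideTree G d v i)
    (hnotdom : v i ∉ S ∧ ∀ s ∈ S, ¬ G.Adj s (v i)) :
    diam G < upperBroadcastNum G :=
  stmt9_general G hT d v hdiam hadj hinj i hi2 S hcard hind hsub hnotdom
end AJC
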